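/- For each m < n, the Lipschitz free space over the diamond graph D_n contains a C-complemented subspace C-isomorphic to ℓ₁^k, where C = 2^{n−m} and k = 2(1 + Σ_{i=0}^{n−1} 4^i) − 2·4^{m−1}. -/

import Mathlib

open Finset

/-- The Lipschitz-free (Kantorovich–Rubinstein) norm of a molecule on a finite
metric space, expressed via duality with `1`-Lipschitz functions. -/
noncomputable def freeNorm (M : Type*) [MetricSpace M] [Fintype M] (m : M → ℝ) : ℝ :=
  sSup {r : ℝ | ∃ f : M → ℝ, LipschitzWith 1 f ∧ r = ∑ p, m p * f p}

/-- Molecules: the underlying vector space of the Lipschitz free space on a finite space;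
equipped with `freeNorm` it is the Lipschitz free space `F(M)`. -/
def molecules (M : Type*) [Fintype M] : Submodule ℝ (M → ℝ) where
  carrier := {m | ∑ p, m p = 0}
  add_mem' := by
    intro a b ha hb
    simp only [Set.mem_setOf_eq, Pi.add_apply, Finset.sum_add_distrib] at *
    rw [ha, hb]; ring
  zero_mem' := by simp
  smul_mem' := by
    intro c a ha
    simp only [Set.mem_setOf_eq, Pi.smul_apply, smul_eq_mul, ← Finset.mul_sum] at *
    rw [ha]; ring

/-- The norm of `ℓ₁^k`. -/
def l1norm {k : ℕ} (x : Fin k → ℝ) : ℝ := ∑ i, |x i|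

/-- Edge set of the `n`-th binary diamond graph: each edge spawns 4 edges. -/
def DE : ℕ → Type
  | 0 => Unit
  | n + 1 => DE n × Fin 4

/-- Vertex set of the `n`-th binary diamond graph: two new vertices per old edge. -/
def DV : ℕ → Type
  | 0 => Fin 2
  | n + 1 => DV n ⊕ DE n × Fin 2

def deDecEq : ∀ n, DecidableEq (DE n)
  | 0 => inferInstanceAs (DecidableEq Unit)
  | n + 1 => letI := deDecEq n; inferInstanceAs (DecidableEq (DE n × Fin 4))

instance (n : ℕ) : DecidableEq (DE n) := deDecEq n

def deFintype : ∀ n, Fintype (DE n)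
  | 0 => inferInstanceAs (Fintype Unit)
  | n + 1 => letI := deFintype n; inferInstanceAs (Fintype (DE n × Fin 4))

instance (n : ℕ) : Fintype (DE n) := deFintype n

def dvDecEq : ∀ n, DecidableEq (DV n)
  | 0 => inferInstanceAs (DecidableEq (Fin 2))
  | n + 1 => letI := dvDecEq n; letI := deDecEq n
              inferInstanceAs (DecidableEq (DV n ⊕ DE n × Fin 2))

instance (n : ℕ) : DecidableEq (DV n) := dvDecEq n

def dvFintype : ∀ n, Fintype (DV n)
  | 0 => inferInstanceAs (Fintype (Fin 2))
  | n + 1 => letI := dvFintype n; letI := deFintype n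
              inferInstanceAs (Fintype (DV n ⊕ DE n × Fin 2))

instance (n : ℕ) : Fintype (DV n) := dvFintype n

/-- Endpoints of the edges of the diamond graph `D_n`; each edge `e = (u,v)`
(`u` the endpoint nearer the top) of `D_{n-1}` is replaced by the quadrilateral
`u, a, v, b` with edges `u a`, `a v`, `b v`, `u b`, each oriented downwards
(first coordinate nearer the top). `D_0` is a single edge `(0,1)` (`0` the top). -/
def ends : ∀ n, DE n → DV n × DV n
  | 0, _ => ((0 : Fin 2), (1 : Fin 2))
  | n + 1, (e, i) =>
      let u : DV (n + 1) := Sum.inl (ends n e).1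
      let v : DV (n + 1) := Sum.inl (ends n e).2
      let a : DV (n + 1) := Sum.inr (e, (0 : Fin 2))
      let b : DV (n + 1) := Sum.inr (e, (1 : Fin 2))
      if i.val = 0 then (u, a)
      else if i.val = 1 then (a, v)
      else if i.val = 2 then (b, v)
      else (u, b)

/-- The `n`-th binary diamond graph `D_n` (as an undirected simple graph). -/
def DG (n : ℕ) : SimpleGraph (DV n) where
  Adj x y := x ≠ y ∧ ∃ e : DE n, ends n e = (x, y) ∨ ends n e = (y, x)
  symm := by
    constructor
    intro x y h
    obtain ⟨hxy, e, he⟩ := h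
    exact ⟨hxy.symm, e, he.symm⟩
  loopless := by
    constructor
    intro x h
    exact h.1 rfl

/-- The cycle space `Z(D_n)` of the diamond graph: the space of circulations, i.e. the
kernel of the boundary operator. Over `ℝ` this is exactly the linear span of the signed
indicator functions of the cycles of `D_n` (w.r.t. the orientation given by `ends`). -/
def cycleSpace (n : ℕ) : Submodule ℝ (DE n → ℝ) where
  carrier := {f | ∀ v : DV n,
    ∑ e : DE n, f e * ((if (ends n e).2 = v then (1 : ℝ) else 0) -
      (if (ends n e).1 = v then (1 : ℝ) else 0)) = 0}
  add_mem' := by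
    intro a b ha hb
    intro v
    simp only [Pi.add_apply, add_mul]
    rw [Finset.sum_add_distrib, ha v, hb v]
    ring
  zero_mem' := by
    intro v
    simp
  smul_mem' := by
    intro c a ha
    intro v
    simp only [Pi.smul_apply, smul_eq_mul, mul_assoc]
    rw [← Finset.mul_sum, ha v, mul_zero]

/-- The `ℓ₁(E(D_n))` norm on the edge space. -/
def e1norm {n : ℕ} (f : DE n → ℝ) : ℝ := ∑ e, |f e|

/-!
Write `n = m + Q`. Each vertex outside `A_{n,m}` gets a molecule: a vertex `w` of `D_{m-1}` gives
`δ_w - δ_a` with `a ∈ A_{n,m}` adjacent to `w` in `D_m`, and a vertex `x` added at a later step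
`k`, with parent edge `uv`, gives `2^{k-m-1} (2 δ_x - δ_u - δ_v)`. As an edge of `D_k` has length
`2^{n-k}` in `D_n`, each of these molecules has norm at most `2^Q`. Conversely, for `c` in the unit
ball of `ℓ_∞`, put `c` on `D_{m-1}` and `0` on `A_{n,m}`, and at each later step give the new
vertex `x` the mean of the values at the ends of its parent edge plus `c_x / 2^{k-m}`: the variation
along an edge of `D_n` is then at most `(1 + Q) / 2^Q ≤ 1`, and the molecules pair with this
function `F c` to give back `c`. Molecules `b_y` of norm `≤ C` with such a linear dual family `F`
span a copy of `ℓ₁` that is `C`-isomorphic to it and `C`-complemented, by the projection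
`μ ↦ ∑_y ⟨μ, F e_y⟩ b_y`.
-/

section FreeNorm

variable {X : Type*} [MetricSpace X] [Fintype X]

lemma bddAbove_pairings {μ : X → ℝ} (hμ : μ ∈ molecules X) :
    BddAbove {r : ℝ | ∃ f : X → ℝ, LipschitzWith 1 f ∧ r = ∑ p, μ p * f p} := by
  rcases isEmpty_or_nonempty X with hX | ⟨⟨p₀⟩⟩
  · exact ⟨0, by rintro r ⟨f, -, rfl⟩; simp⟩
  refine ⟨∑ p, |μ p| * dist p p₀, ?_⟩
  rintro r ⟨f, hf, rfl⟩
  have hμ' : ∑ p, μ p = 0 := hμ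
  calc ∑ p, μ p * f p = ∑ p, μ p * (f p - f p₀) := by
        simp only [mul_sub, Finset.sum_sub_distrib, ← Finset.sum_mul, hμ', zero_mul, sub_zero]
    _ ≤ ∑ p, |μ p| * dist p p₀ := by
        refine Finset.sum_le_sum fun p _ => ?_
        calc μ p * (f p - f p₀) ≤ |μ p| * |f p - f p₀| := by rw [← abs_mul]; exact le_abs_self _
          _ ≤ |μ p| * dist p p₀ := by
            gcongr
            simpa [Real.dist_eq] using hf.dist_le_mul p p₀

lemma le_freeNorm {μ f : X → ℝ} (hμ : μ ∈ molecules X) (hf : LipschitzWith 1 f) :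
    μ ⬝ᵥ f ≤ freeNorm X μ :=
  le_csSup (bddAbove_pairings hμ) ⟨f, hf, rfl⟩

lemma abs_dotProduct_le_freeNorm {μ f : X → ℝ} (hμ : μ ∈ molecules X) (hf : LipschitzWith 1 f) :
    |μ ⬝ᵥ f| ≤ freeNorm X μ := by
  refine abs_le'.2 ⟨le_freeNorm hμ hf, ?_⟩
  rw [← dotProduct_neg]
  exact le_freeNorm hμ hf.neg

lemma freeNorm_le_of_forall {μ : X → ℝ} {b : ℝ}
    (h : ∀ f : X → ℝ, LipschitzWith 1 f → μ ⬝ᵥ f ≤ b) : freeNorm X μ ≤ b :=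
  csSup_le ⟨_, 0, LipschitzWith.const' 0, rfl⟩ (by rintro r ⟨f, hf, rfl⟩; exact h f hf)

end FreeNorm

theorem lipschitzWith_one_iff_adj {V : Type*} [MetricSpace V] (G : SimpleGraph V)
    (hdist : ∀ x y, dist x y = (G.dist x y : ℝ)) {f : V → ℝ} :
    LipschitzWith 1 f ↔ ∀ x y, G.Adj x y → |f x - f y| ≤ 1 := by
  refine ⟨fun hf x y hxy => ?_, fun h => LipschitzWith.of_dist_le_mul fun x y => ?_⟩
  · simpa [Real.dist_eq, hdist, SimpleGraph.dist_eq_one_iff_adj.2 hxy] using hf.dist_le_mul x y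
  have walk_bound : ∀ {x y} (p : G.Walk x y), |f x - f y| ≤ p.length := by
    intro x y p
    induction p with
    | nil => simp
    | cons hadj p ih =>
      rw [SimpleGraph.Walk.length_cons, Nat.cast_succ]
      exact (abs_sub_le _ _ _).trans (by linarith [h _ _ hadj])
  rcases eq_or_ne (G.dist x y) 0 with h0 | h0
  · simp [dist_eq_zero.1 (by simp [hdist, h0] : dist x y = 0)]
  obtain ⟨p, hp⟩ := SimpleGraph.exists_walk_of_dist_ne_zero h0
  simpa [Real.dist_eq, hdist, hp] using walk_bound p

section Complemented

open Matrix

variable {X K : Type*} [Fintype X] [Fintype K] {b : K → X → ℝ} {F : (K → ℝ) →ₗ[ℝ] (X → ℝ)}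

lemma linearCombination_dotProduct (b : K → X → ℝ) (c : K → ℝ) (g : X → ℝ) :
    Fintype.linearCombination ℝ b c ⬝ᵥ g = c ⬝ᵥ fun y => b y ⬝ᵥ g := by
  simp only [Fintype.linearCombination_apply, sum_dotProduct, smul_dotProduct, smul_eq_mul]
  rfl

lemma linearCombination_mem_molecules (hb : ∀ y, b y ∈ molecules X) (c : K → ℝ) :
    Fintype.linearCombination ℝ b c ∈ molecules X := by
  rw [Fintype.linearCombination_apply]
  exact Submodule.sum_mem _ fun y _ => Submodule.smul_mem _ _ (hb y)

noncomputable def dotTranspose [DecidableEq K] (F : (K → ℝ) →ₗ[ℝ] (X → ℝ)) :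
    (X → ℝ) →ₗ[ℝ] (K → ℝ) :=
  (LinearMap.toMatrix' F)ᵀ.mulVecLin

lemma dotProduct_apply_eq_dotTranspose [DecidableEq K] (μ : X → ℝ) (c : K → ℝ) :
    μ ⬝ᵥ F c = dotTranspose F μ ⬝ᵥ c := by
  rw [dotTranspose, mulVecLin_apply, ← vecMul_transpose, transpose_transpose,
    ← dotProduct_mulVec, LinearMap.toMatrix'_mulVec]

lemma linearCombination_dotProduct_apply (hbF : ∀ c y, b y ⬝ᵥ F c = c y) (c d : K → ℝ) :
    Fintype.linearCombination ℝ b c ⬝ᵥ F d = c ⬝ᵥ d := by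
  simp only [linearCombination_dotProduct, hbF]

lemma dotTranspose_linearCombination [DecidableEq K] (hbF : ∀ c y, b y ⬝ᵥ F c = c y)
    (c : K → ℝ) : dotTranspose F (Fintype.linearCombination ℝ b c) = c :=
  dotProduct_eq _ _ fun d => by
    rw [← dotProduct_apply_eq_dotTranspose, linearCombination_dotProduct_apply hbF]

variable [MetricSpace X] {C : ℝ}

lemma sum_abs_le_freeNorm_linearCombination (hbF : ∀ c y, b y ⬝ᵥ F c = c y)
    (hF : ∀ c, (∀ y, |c y| ≤ 1) → LipschitzWith 1 (F c)) (hb : ∀ y, b y ∈ molecules X)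
    (c : K → ℝ) : ∑ y, |c y| ≤ freeNorm X (Fintype.linearCombination ℝ b c) := by
  have hsign : ∀ y, |(SignType.sign (c y) : ℝ)| ≤ 1 := fun y => by
    rcases SignType.trichotomy (SignType.sign (c y)) with h | h | h <;> simp [h]
  calc ∑ y, |c y| = c ⬝ᵥ fun y => (SignType.sign (c y) : ℝ) := by
        simp [dotProduct, self_mul_sign]
    _ = Fintype.linearCombination ℝ b c ⬝ᵥ F fun y => (SignType.sign (c y) : ℝ) :=
        (linearCombination_dotProduct_apply hbF _ _).symm
    _ ≤ _ := le_freeNorm (linearCombination_mem_molecules hb c) (hF _ hsign)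

lemma freeNorm_linearCombination_le (hb : ∀ y, b y ∈ molecules X)
    (hbC : ∀ y, freeNorm X (b y) ≤ C) (c : K → ℝ) :
    freeNorm X (Fintype.linearCombination ℝ b c) ≤ C * ∑ y, |c y| :=
  freeNorm_le_of_forall fun f hf => by
    rw [linearCombination_dotProduct, Finset.mul_sum]
    refine Finset.sum_le_sum fun y _ => ?_
    calc c y * (b y ⬝ᵥ f) ≤ |c y| * |b y ⬝ᵥ f| := by rw [← abs_mul]; exact le_abs_self _
      _ ≤ |c y| * C := by gcongr; exact (abs_dotProduct_le_freeNorm (hb y) hf).trans (hbC y)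
      _ = C * |c y| := mul_comm _ _

lemma freeNorm_linearCombination_dotTranspose_le [DecidableEq K] (hC : 0 < C)
    (hF : ∀ c, (∀ y, |c y| ≤ 1) → LipschitzWith 1 (F c)) (hb : ∀ y, b y ∈ molecules X)
    (hbC : ∀ y, freeNorm X (b y) ≤ C) {μ : X → ℝ} (hμ : μ ∈ molecules X) :
    freeNorm X (Fintype.linearCombination ℝ b (dotTranspose F μ)) ≤ C * freeNorm X μ :=
  freeNorm_le_of_forall fun f hf => by
    set a : K → ℝ := fun y => b y ⬝ᵥ f
    have ha : ∀ y, |(C⁻¹ • a) y| ≤ 1 := fun y => by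
      rw [Pi.smul_apply, smul_eq_mul, abs_mul, abs_inv, abs_of_pos hC, inv_mul_le_one₀ hC]
      exact (abs_dotProduct_le_freeNorm (hb y) hf).trans (hbC y)
    calc Fintype.linearCombination ℝ b (dotTranspose F μ) ⬝ᵥ f = μ ⬝ᵥ F a := by
          rw [linearCombination_dotProduct, dotProduct_apply_eq_dotTranspose, dotProduct_comm]
      _ = C * (μ ⬝ᵥ F (C⁻¹ • a)) := by
          rw [map_smul, dotProduct_smul, smul_eq_mul, ← mul_assoc, mul_inv_cancel₀ hC.ne', one_mul]
      _ ≤ C * freeNorm X μ := by gcongr; exact le_freeNorm hμ (hF _ ha)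

theorem exists_complemented_l1 {k : ℕ} (hk : Fintype.card K = k) (hC : 0 < C)
    (hbF : ∀ c y, b y ⬝ᵥ F c = c y) (hF : ∀ c, (∀ y, |c y| ≤ 1) → LipschitzWith 1 (F c))
    (hb : ∀ y, b y ∈ molecules X) (hbC : ∀ y, freeNorm X (b y) ≤ C) :
    ∃ Y : Submodule ℝ (X → ℝ), Y ≤ molecules X ∧
      (∃ T : Y ≃ₗ[ℝ] (Fin k → ℝ),
        ∀ u : Y, l1norm (T u) ≤ freeNorm X u ∧ freeNorm X u ≤ C * l1norm (T u)) ∧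
      (∃ P : (X → ℝ) →ₗ[ℝ] (X → ℝ),
        (∀ μ ∈ molecules X, P μ ∈ Y) ∧ (∀ u ∈ Y, P u = u) ∧
        ∀ μ ∈ molecules X, freeNorm X (P μ) ≤ C * freeNorm X μ) := by
  classical
  set S := Fintype.linearCombination ℝ b
  have hS : Function.Injective S :=
    Function.LeftInverse.injective (dotTranspose_linearCombination (F := F) hbF)
  set e := LinearEquiv.funCongrLeft ℝ ℝ (Fintype.equivFinOfCardEq hk).symm
  have hl1 : ∀ c, l1norm (e c) = ∑ y, |c y| := fun c =>
    Equiv.sum_comp (Fintype.equivFinOfCardEq hk).symm fun y => |c y|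
  refine ⟨LinearMap.range S, ?_, ⟨(LinearEquiv.ofInjective S hS).symm.trans e, fun u => ?_⟩,
    ⟨S ∘ₗ dotTranspose F, fun μ _ => LinearMap.mem_range_self S _, ?_, fun μ hμ =>
      freeNorm_linearCombination_dotTranspose_le hC hF hb hbC hμ⟩⟩
  · rintro _ ⟨c, rfl⟩
    exact linearCombination_mem_molecules hb c
  · obtain ⟨c, rfl⟩ := (LinearEquiv.ofInjective S hS).surjective u
    simp only [LinearEquiv.trans_apply, LinearEquiv.symm_apply_apply, hl1,
      LinearEquiv.ofInjective_apply]
    exact ⟨sum_abs_le_freeNorm_linearCombination hbF hF hb c,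
      freeNorm_linearCombination_le hb hbC c⟩
  · rintro _ ⟨c, rfl⟩
    rw [LinearMap.comp_apply, dotTranspose_linearCombination hbF]

end Complemented

lemma ends_fst_ne_snd : ∀ (j : ℕ) (e : DE j), (ends j e).1 ≠ (ends j e).2
  | 0, _ => Fin.zero_ne_one
  | j + 1, (e, i) => by fin_cases i <;> exact nofun

lemma exists_ends_eq : ∀ (j : ℕ) (v : DV j), ∃ e : DE j, (ends j e).1 = v ∨ (ends j e).2 = v
  | 0, v => ⟨(), by fin_cases v; exacts [Or.inl rfl, Or.inr rfl]⟩
  | j + 1, Sum.inl w => by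
    obtain ⟨e, he | he⟩ := exists_ends_eq j w
    · exact ⟨(e, 0), Or.inl (congrArg Sum.inl he)⟩
    · exact ⟨(e, 1), Or.inr (congrArg Sum.inl he)⟩
  | j + 1, Sum.inr (e, i) => by
    fin_cases i
    · exact ⟨(e, 0), Or.inr rfl⟩
    · exact ⟨(e, 2), Or.inl rfl⟩

def EdgeBounded (j : ℕ) (b : ℝ) (f : DV j → ℝ) : Prop :=
  ∀ e : DE j, |f (ends j e).1 - f (ends j e).2| ≤ b

theorem lipschitzWith_one_iff_edgeBounded {n : ℕ} [MetricSpace (DV n)]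
    (hdist : ∀ x y : DV n, dist x y = ((DG n).dist x y : ℝ)) {f : DV n → ℝ} :
    LipschitzWith 1 f ↔ EdgeBounded n 1 f := by
  rw [lipschitzWith_one_iff_adj _ hdist]
  refine ⟨fun h e => h _ _ ⟨ends_fst_ne_snd n e, e, Or.inl rfl⟩, ?_⟩
  rintro h x y ⟨-, e, he | he⟩
  · simpa [he] using h e
  · simpa [he, abs_sub_comm] using h e

lemma edgeBounded_succ_iff {j : ℕ} {b : ℝ} {f : DV (j + 1) → ℝ} :
    EdgeBounded (j + 1) b f ↔ ∀ (e : DE j) (i : Fin 2),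
      |f (Sum.inl (ends j e).1) - f (Sum.inr (e, i))| ≤ b ∧
        |f (Sum.inr (e, i)) - f (Sum.inl (ends j e).2)| ≤ b := by
  refine ⟨fun h e i => ?_, fun h => ?_⟩
  · fin_cases i
    exacts [⟨h (e, 0), h (e, 1)⟩, ⟨h (e, 3), h (e, 2)⟩]
  · rintro ⟨e, i⟩
    fin_cases i
    exacts [(h e 0).1, (h e 0).2, (h e 1).2, (h e 1).1]

namespace EdgeBounded

lemma mono {j : ℕ} {b b' : ℝ} {f : DV j → ℝ} (hf : EdgeBounded j b f) (hb : b ≤ b') :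
    EdgeBounded j b' f :=
  fun e => (hf e).trans hb

variable {j : ℕ} {b : ℝ} {f : DV (j + 1) → ℝ}

lemma comp_inl (hf : EdgeBounded (j + 1) b f) : EdgeBounded j (2 * b) (f ∘ Sum.inl) := fun e => by
  obtain ⟨h₁, h₂⟩ := edgeBounded_succ_iff.1 hf e 0
  change |f (Sum.inl _) - f (Sum.inl _)| ≤ 2 * b
  exact (abs_sub_le _ (f (Sum.inr (e, 0))) _).trans (by linarith)

lemma abs_two_mul_sub_sub_le (hf : EdgeBounded (j + 1) b f) (x : DE j × Fin 2) :
    |2 * f (Sum.inr x) - f (Sum.inl (ends j x.1).1) - f (Sum.inl (ends j x.1).2)| ≤ 2 * b := by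
  obtain ⟨h₁, h₂⟩ := edgeBounded_succ_iff.1 hf x.1 x.2
  rw [abs_sub_comm] at h₁
  calc _ = |(f (Sum.inr x) - f (Sum.inl (ends j x.1).1)) +
        (f (Sum.inr x) - f (Sum.inl (ends j x.1).2))| := by ring_nf
    _ ≤ 2 * b := (abs_add_le _ _).trans (by linarith)

end EdgeBounded

noncomputable def midpointExtend {j : ℕ} (g : DV j → ℝ) (s : DE j × Fin 2 → ℝ) : DV (j + 1) → ℝ :=
  Sum.elim g fun x => (g (ends j x.1).1 + g (ends j x.1).2) / 2 + s x

lemma EdgeBounded.midpointExtend {j : ℕ} {b a : ℝ} {g : DV j → ℝ} {s : DE j × Fin 2 → ℝ}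
    (hg : EdgeBounded j b g) (hs : ∀ x, |s x| ≤ a) :
    EdgeBounded (j + 1) (b / 2 + a) (midpointExtend g s) :=
  edgeBounded_succ_iff.2 fun e i => by
    have h₁ := abs_le.1 (hg e)
    have h₂ := abs_le.1 (hs (e, i))
    simp only [_root_.midpointExtend, Sum.elim_inl, Sum.elim_inr]
    constructor <;> rw [abs_le] <;> constructor <;> linarith

section Refinement

open Matrix

lemma sumElim_dotProduct {α β : Type*} [Fintype α] [Fintype β] (a : α → ℝ) (b : β → ℝ)
    (f : α ⊕ β → ℝ) : Sum.elim a b ⬝ᵥ f = a ⬝ᵥ (f ∘ Sum.inl) + b ⬝ᵥ (f ∘ Sum.inr) := by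
  rw [← Sum.elim_comp_inl_inr f, sumElim_dotProduct_sumElim, Sum.elim_comp_inl, Sum.elim_comp_inr]

/-- For the graph metric, `EdgeBounded j β` means `β`-Lipschitz: `L` bounds the norms of the
molecules `b y`, and `γ` the Lipschitz constants of the `F c` with `‖c‖_∞ ≤ 1`. -/
structure IsDualSystem (j : ℕ) {K : Type*} (b : K → DV j → ℝ)
    (F : (K → ℝ) →ₗ[ℝ] (DV j → ℝ)) (L γ : ℝ) : Prop where
  dotProduct_apply : ∀ c y, b y ⬝ᵥ F c = c y
  abs_dotProduct_le : ∀ {β f}, EdgeBounded j β f → ∀ y, |b y ⬝ᵥ f| ≤ L * β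
  edgeBounded_apply : ∀ {c}, (∀ y, |c y| ≤ 1) → EdgeBounded j γ (F c)

/-- A vertex of `D_{j+1}` added at step `j + 1` and adjacent to `v`. -/
noncomputable def anchor (j : ℕ) (v : DV j) : DE j × Fin 2 :=
  ((exists_ends_eq j v).choose, 0)

lemma EdgeBounded.abs_sub_anchor_le {j : ℕ} {b : ℝ} {f : DV (j + 1) → ℝ}
    (hf : EdgeBounded (j + 1) b f) (v : DV j) :
    |f (Sum.inl v) - f (Sum.inr (anchor j v))| ≤ b := by
  obtain ⟨h₁, h₂⟩ := edgeBounded_succ_iff.1 hf (exists_ends_eq j v).choose 0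
  rcases (exists_ends_eq j v).choose_spec with h | h
  · rwa [h] at h₁
  · rwa [h, abs_sub_comm] at h₂

noncomputable def baseMolecule (M : ℕ) (w : DV M) : DV (M + 1) → ℝ :=
  Sum.elim (Pi.single w 1) (-Pi.single (anchor M w) 1)

noncomputable def baseDual (M : ℕ) : (DV M → ℝ) →ₗ[ℝ] (DV (M + 1) → ℝ) where
  toFun c := Sum.elim c 0
  map_add' c d := by
    funext v
    rcases v with w | x
    · rfl
    · exact (add_zero (0 : ℝ)).symm
  map_smul' r c := by
    funext v
    rcases v with w | x
    · rfl
    · exact (smul_zero r).symm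

lemma baseMolecule_dotProduct {M : ℕ} (w : DV M) (f : DV (M + 1) → ℝ) :
    baseMolecule M w ⬝ᵥ f = f (Sum.inl w) - f (Sum.inr (anchor M w)) := by
  erw [sumElim_dotProduct]
  simp only [neg_dotProduct, single_dotProduct]
  dsimp only [Function.comp]
  ring

theorem isDualSystem_base (M : ℕ) : IsDualSystem (M + 1) (baseMolecule M) (baseDual M) 1 1 where
  dotProduct_apply c w := by
    rw [baseMolecule_dotProduct]
    exact sub_zero (c w)
  abs_dotProduct_le hf w := by
    rw [baseMolecule_dotProduct, one_mul]
    exact hf.abs_sub_anchor_le w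
  edgeBounded_apply hc := edgeBounded_succ_iff.2 fun e _ => by
    change |_ - 0| ≤ 1 ∧ |0 - _| ≤ 1
    rw [sub_zero, zero_sub, abs_neg]
    exact ⟨hc _, hc _⟩

variable {j : ℕ} {K : Type*}

noncomputable def refineMolecule (b : K → DV j → ℝ) (L : ℝ) :
    K ⊕ DE j × Fin 2 → DV (j + 1) → ℝ
  | Sum.inl y => Sum.elim (b y) 0
  | Sum.inr x => Sum.elim (-Pi.single (ends j x.1).1 L - Pi.single (ends j x.1).2 L)
      (Pi.single x (2 * L))

noncomputable def refineDual (F : (K → ℝ) →ₗ[ℝ] (DV j → ℝ)) (L : ℝ) :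
    (K ⊕ DE j × Fin 2 → ℝ) →ₗ[ℝ] (DV (j + 1) → ℝ) where
  toFun c := midpointExtend (F (c ∘ Sum.inl)) fun x => c (Sum.inr x) / (2 * L)
  map_add' c d := by
    funext v
    rw [Pi.add_apply]
    rcases v with v | x <;>
      simp only [midpointExtend, Sum.elim_inl, Sum.elim_inr, Pi.add_comp, map_add, Pi.add_apply]
    ring
  map_smul' r c := by
    funext v
    rw [Pi.smul_apply]
    rcases v with v | x <;>
      simp only [midpointExtend, Sum.elim_inl, Sum.elim_inr, Pi.smul_comp, map_smul,
        Pi.smul_apply, smul_eq_mul, RingHom.id_apply]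
    ring

lemma refineDual_apply_inl (F : (K → ℝ) →ₗ[ℝ] (DV j → ℝ)) (L : ℝ) (c : K ⊕ DE j × Fin 2 → ℝ)
    (v : DV j) : refineDual F L c (Sum.inl v) = F (c ∘ Sum.inl) v :=
  rfl

lemma refineDual_apply_inr (F : (K → ℝ) →ₗ[ℝ] (DV j → ℝ)) (L : ℝ) (c : K ⊕ DE j × Fin 2 → ℝ)
    (x : DE j × Fin 2) : refineDual F L c (Sum.inr x) =
      (F (c ∘ Sum.inl) (ends j x.1).1 + F (c ∘ Sum.inl) (ends j x.1).2) / 2 +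
        c (Sum.inr x) / (2 * L) :=
  rfl

lemma refineMolecule_inl_dotProduct (b : K → DV j → ℝ) (L : ℝ) (y : K) (f : DV (j + 1) → ℝ) :
    refineMolecule b L (Sum.inl y) ⬝ᵥ f = b y ⬝ᵥ (f ∘ Sum.inl) := by
  erw [sumElim_dotProduct, zero_dotProduct, add_zero]
  rfl

lemma refineMolecule_inr_dotProduct (b : K → DV j → ℝ) (L : ℝ) (x : DE j × Fin 2)
    (f : DV (j + 1) → ℝ) : refineMolecule b L (Sum.inr x) ⬝ᵥ f =
      L * (2 * f (Sum.inr x) - f (Sum.inl (ends j x.1).1) - f (Sum.inl (ends j x.1).2)) := by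
  erw [sumElim_dotProduct]
  simp only [sub_dotProduct, neg_dotProduct, single_dotProduct]
  dsimp only [Function.comp]
  ring

theorem IsDualSystem.refine {b : K → DV j → ℝ} {F : (K → ℝ) →ₗ[ℝ] (DV j → ℝ)} {L γ : ℝ}
    (h : IsDualSystem j b F L γ) (hL : 0 < L) :
    IsDualSystem (j + 1) (refineMolecule b L) (refineDual F L) (2 * L) (γ / 2 + 1 / (2 * L)) where
  dotProduct_apply c
    | Sum.inl y => by
      rw [refineMolecule_inl_dotProduct]
      exact h.dotProduct_apply (c ∘ Sum.inl) y
    | Sum.inr x => by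
      rw [refineMolecule_inr_dotProduct, refineDual_apply_inr, refineDual_apply_inl,
        refineDual_apply_inl]
      field_simp
      ring
  abs_dotProduct_le {β f} hf
    | Sum.inl y => by
      rw [refineMolecule_inl_dotProduct, mul_comm 2 L, mul_assoc]
      exact h.abs_dotProduct_le hf.comp_inl y
    | Sum.inr x => by
      rw [refineMolecule_inr_dotProduct, abs_mul, abs_of_pos hL, mul_comm 2 L, mul_assoc]
      gcongr
      exact hf.abs_two_mul_sub_sub_le x
  edgeBounded_apply {c} hc := (h.edgeBounded_apply fun y => hc (Sum.inl y)).midpointExtend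
    fun x => by
      rw [abs_div, abs_of_pos (by positivity : 0 < 2 * L)]
      exact div_le_div_of_nonneg_right (hc _) (by positivity)

end Refinement

namespace IsDualSystem

variable {j : ℕ} {K : Type*} {b : K → DV j → ℝ} {F : (K → ℝ) →ₗ[ℝ] (DV j → ℝ)} {L γ : ℝ}

lemma mem_molecules (h : IsDualSystem j b F L γ) (y : K) : b y ∈ molecules (DV j) := by
  have h₀ := h.abs_dotProduct_le (β := 0) (f := fun _ => 1) (fun e => by simp) y
  rw [mul_zero, abs_nonpos_iff] at h₀
  simpa [molecules, dotProduct] using h₀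

lemma freeNorm_le [MetricSpace (DV j)]
    (hdist : ∀ x y : DV j, dist x y = ((DG j).dist x y : ℝ)) (h : IsDualSystem j b F L γ)
    (y : K) : freeNorm (DV j) (b y) ≤ L :=
  freeNorm_le_of_forall fun _ hf => (le_abs_self _).trans <| by
    simpa using h.abs_dotProduct_le ((lipschitzWith_one_iff_edgeBounded hdist).1 hf) y

lemma lipschitzWith [MetricSpace (DV j)]
    (hdist : ∀ x y : DV j, dist x y = ((DG j).dist x y : ℝ)) (h : IsDualSystem j b F L γ)
    (hγ : γ ≤ 1) {c : K → ℝ} (hc : ∀ y, |c y| ≤ 1) : LipschitzWith 1 (F c) :=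
  (lipschitzWith_one_iff_edgeBounded hdist).2 ((h.edgeBounded_apply hc).mono hγ)

end IsDualSystem

lemma card_DE : ∀ j, Fintype.card (DE j) = 4 ^ j
  | 0 => rfl
  | j + 1 => by
    rw [show Fintype.card (DE (j + 1)) = Fintype.card (DE j × Fin 4) from rfl, Fintype.card_prod,
      card_DE j, Fintype.card_fin, pow_succ]

lemma card_DV_succ (j : ℕ) : Fintype.card (DV (j + 1)) = Fintype.card (DV j) + 2 * 4 ^ j := by
  rw [show Fintype.card (DV (j + 1)) = Fintype.card (DV j ⊕ DE j × Fin 2) from rfl,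
    Fintype.card_sum, Fintype.card_prod, card_DE, Fintype.card_fin, mul_comm]

lemma card_DV : ∀ j, Fintype.card (DV j) = 2 * (1 + ∑ i ∈ range j, 4 ^ i)
  | 0 => rfl
  | j + 1 => by rw [card_DV_succ, card_DV j, sum_range_succ]; ring

/-- The dual system on `D_{M+1+t}` indexed by the vertices outside `A_{M+1+t, M+1}`. -/
theorem exists_isDualSystem (M : ℕ) : ∀ t : ℕ, ∃ (K : Type) (_ : Fintype K),
    Fintype.card K + 2 * 4 ^ M = Fintype.card (DV (M + 1 + t)) ∧
      ∃ (b : K → DV (M + 1 + t) → ℝ) (F : (K → ℝ) →ₗ[ℝ] (DV (M + 1 + t) → ℝ)),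
        IsDualSystem (M + 1 + t) b F (2 ^ t) ((1 + t) / 2 ^ t)
  | 0 => ⟨DV M, inferInstance, (card_DV_succ M).symm, baseMolecule M, baseDual M,
      by simpa using isDualSystem_base M⟩
  | t + 1 => by
    obtain ⟨K, _, hK, b, F, h⟩ := exists_isDualSystem M t
    refine ⟨K ⊕ DE (M + 1 + t) × Fin 2, inferInstance, ?_, refineMolecule b (2 ^ t),
      refineDual F (2 ^ t), ?_⟩
    · rw [Fintype.card_sum, Fintype.card_prod, Fintype.card_fin, card_DE, ← Nat.add_assoc,
        card_DV_succ (M + 1 + t)]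
      omega
    · have e₁ : (2 : ℝ) ^ (t + 1) = 2 * 2 ^ t := pow_succ' 2 t
      have e₂ : (1 + ((t + 1 : ℕ) : ℝ)) / 2 ^ (t + 1) = (1 + t) / 2 ^ t / 2 + 1 / (2 * 2 ^ t) := by
        push_cast
        field_simp
        ring
      rw [e₂, e₁]
      exact h.refine (by positivity)

theorem stmt8 (n m : ℕ) (hm : 1 ≤ m) (hmn : m < n) [MetricSpace (DV n)]
    (hdist : ∀ x y : DV n, dist x y = ((DG n).dist x y : ℝ)) :
    ∃ Y : Submodule ℝ (DV n → ℝ), Y ≤ molecules (DV n) ∧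
      (∃ T : Y ≃ₗ[ℝ] (Fin (2 * (1 + ∑ i ∈ Finset.range n, 4 ^ i) - 2 * 4 ^ (m - 1)) → ℝ),
        ∀ u : Y, l1norm (T u) ≤ freeNorm (DV n) u ∧
          freeNorm (DV n) u ≤ (2 ^ (n - m) : ℝ) * l1norm (T u)) ∧
      (∃ P : (DV n → ℝ) →ₗ[ℝ] (DV n → ℝ),
        (∀ m' ∈ molecules (DV n), P m' ∈ Y) ∧ (∀ u ∈ Y, P u = u) ∧
        ∀ m' ∈ molecules (DV n),
          freeNorm (DV n) (P m') ≤ (2 ^ (n - m) : ℝ) * freeNorm (DV n) m') := by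
  obtain ⟨M, rfl⟩ : ∃ M, m = M + 1 := ⟨m - 1, by omega⟩
  obtain ⟨Q, rfl⟩ : ∃ Q, n = M + 1 + Q := ⟨n - (M + 1), by omega⟩
  obtain ⟨K, _, hK, b, F, h⟩ := exists_isDualSystem M Q
  have hγ : (1 + (Q : ℝ)) / 2 ^ Q ≤ 1 :=
    div_le_one_of_le₀ (by exact_mod_cast Nat.one_add_le_iff.2 Nat.lt_two_pow_self) (by positivity)
  rw [show M + 1 + Q - (M + 1) = Q by omega, show M + 1 - 1 = M by omega]
  exact exists_complemented_l1 (by rw [card_DV] at hK; omega) (by positivity) h.dotProduct_apply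
    (fun _ => h.lipschitzWith hdist hγ) h.mem_molecules (h.freeNorm_le hdist)
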